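/- arXiv:2011.13103 — 2 statements merged into one kernel-verified Lean document; each statement's English description precedes it below -/
import Mathlib

section
/- Let F : Δ_{2^m} × Δ_{2^n} → Δ_{2^s} have algebraic form M_F u x and let c ∈ Δ_{2^s}. Define the truth matrix T ∈ B_{2^m × 2^n} by T_{i,j} = 1 iff M_F δ_{2^m}^i δ_{2^n}^j = c. Then a state feedback u = M_G x with M_G ∈ L_{2^m × 2^n} is an antecedence solution (i.e., M_F (M_G x) x = c for all x ∈ Δ_{2^n}) if and only if M_G ≤ T entrywise. -/
open Matrix Kronecker

noncomputable section

/-- Row-major pairing `(i, j) ↦ N * i + j`, matching the standard Kronecker convention. -/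
def kronEquiv (M N : ℕ) : Fin M × Fin N ≃ Fin (M * N) := finProdFinEquiv

/-- Kronecker product of two (column) vectors. -/
def vecKron {M N : ℕ} (u : Fin M → ℝ) (x : Fin N → ℝ) : Fin (M * N) → ℝ :=
  fun k => u ((kronEquiv M N).symm k).1 * x ((kronEquiv M N).symm k).2

/-- `δ_N^i` (0-indexed): the `i`-th column of the identity matrix `I_N`. -/
def eVec (N : ℕ) (i : Fin N) : Fin N → ℝ := fun j => if j = i then 1 else 0

/-- The set `Δ_N` of columns of the identity matrix. -/
def deltaSet (N : ℕ) : Set (Fin N → ℝ) := {x | ∃ i, x = eVec N i}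

/-- A matrix is logical if every column is a standard basis vector. -/
def IsLogical {m n : ℕ} (L : Matrix (Fin m) (Fin n) ℝ) : Prop :=
  ∀ j, ∃ i, (fun k => L k j) = eVec m i

/-- The power-reducing matrix `PR_k = diag(δ_k^1, …, δ_k^k)`: column `j` is `δ_k^j ⊗ δ_k^j`. -/
def PRmat (k : ℕ) : Matrix (Fin (k * k)) (Fin k) ℝ :=
  Matrix.of fun i j => vecKron (eVec k j) (eVec k j) i

lemma stp_dim (n p : ℕ) : p * (Nat.lcm n p / p) = n * (Nat.lcm n p / n) := by
  rw [Nat.mul_div_cancel' (Nat.dvd_lcm_right n p), Nat.mul_div_cancel' (Nat.dvd_lcm_left n p)]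

/-- The semi-tensor product `A ⋉ B = (A ⊗ I_{t/n})(B ⊗ I_{t/p})`, `t = lcm(n,p)`. -/
def stp {m n p q : ℕ} (A : Matrix (Fin m) (Fin n) ℝ) (B : Matrix (Fin p) (Fin q) ℝ) :
    Matrix (Fin (m * (Nat.lcm n p / n))) (Fin (q * (Nat.lcm n p / p))) ℝ :=
  (Matrix.reindex (kronEquiv m _) (kronEquiv n _)
      (A ⊗ₖ (1 : Matrix (Fin (Nat.lcm n p / n)) (Fin (Nat.lcm n p / n)) ℝ))) *
  (Matrix.reindex ((kronEquiv p _).trans (finCongr (stp_dim n p))) (kronEquiv q _)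
      (B ⊗ₖ (1 : Matrix (Fin (Nat.lcm n p / p)) (Fin (Nat.lcm n p / p)) ℝ)))

/-
A logical matrix `M_G` with columns `δ^{g j}` maps `δ^j` to `δ^{g j}`, so `u = M_G x` is an
antecedence solution iff `M_F δ^{g j} δ^j = c`, i.e. `T_{g j, j} = 1`, for every `j`. Since the
only nonzero entry of column `j` of `M_G` is a `1` in row `g j`, and `T` is a `{0,1}`-matrix,
this is exactly `M_G ≤ T`.
-/

theorem mulVec_eVec {M N : ℕ} (A : Matrix (Fin M) (Fin N) ℝ) (j : Fin N) :
    A *ᵥ eVec N j = fun i => A i j := by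
  funext i
  simp [Matrix.mulVec, dotProduct, eVec]

theorem forall_mem_deltaSet_iff {N : ℕ} {P : (Fin N → ℝ) → Prop} :
    (∀ x ∈ deltaSet N, P x) ↔ ∀ j, P (eVec N j) := by
  simp [deltaSet]

theorem le_ite_iff_of_col_eq_eVec {m n : ℕ} {L : Matrix (Fin m) (Fin n) ℝ} {g : Fin n → Fin m}
    (hg : ∀ j, (fun k => L k j) = eVec m (g j)) (p : Fin m → Fin n → Prop)
    [∀ i j, Decidable (p i j)] :
    (∀ i j, L i j ≤ if p i j then 1 else 0) ↔ ∀ j, p (g j) j := by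
  have hL : ∀ i j, L i j = if i = g j then 1 else 0 := fun i j => congrFun (hg j) i
  refine ⟨fun h j => ?_, fun h i j => ?_⟩
  · by_contra hp
    have := h (g j) j
    simp only [hL, if_neg hp] at this
    norm_num at this
  · rw [hL]
    split_ifs with hi <;> simp_all

theorem antecedence_iff_general (m n s : ℕ)
    (MF : Matrix (Fin (2 ^ s)) (Fin (2 ^ m * 2 ^ n)) ℝ)
    (c : Fin (2 ^ s) → ℝ)
    (T : Matrix (Fin (2 ^ m)) (Fin (2 ^ n)) ℝ)
    (hT : ∀ i j, T i j =
      if MF.mulVec (vecKron (eVec (2 ^ m) i) (eVec (2 ^ n) j)) = c then 1 else 0)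
    (MG : Matrix (Fin (2 ^ m)) (Fin (2 ^ n)) ℝ) (hMG : IsLogical MG) :
    (∀ x ∈ deltaSet (2 ^ n), MF.mulVec (vecKron (MG.mulVec x) x) = c) ↔
      ∀ i j, MG i j ≤ T i j := by
  choose g hg using hMG
  simp only [hT]
  rw [le_ite_iff_of_col_eq_eVec hg, forall_mem_deltaSet_iff]
  simp only [mulVec_eVec, hg]

/-- `u = M_G x` is an antecedence solution of `M_F u x = c`
iff `M_G ≤ T` entrywise, where `T` is the truth matrix. -/
theorem antecedence_iff (m n s : ℕ)
    (MF : Matrix (Fin (2 ^ s)) (Fin (2 ^ m * 2 ^ n)) ℝ) (hMF : IsLogical MF)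
    (c : Fin (2 ^ s) → ℝ) (hc : c ∈ deltaSet (2 ^ s))
    (T : Matrix (Fin (2 ^ m)) (Fin (2 ^ n)) ℝ)
    (hT : ∀ i j, T i j =
      if MF.mulVec (vecKron (eVec (2 ^ m) i) (eVec (2 ^ n) j)) = c then 1 else 0)
    (MG : Matrix (Fin (2 ^ m)) (Fin (2 ^ n)) ℝ) (hMG : IsLogical MG) :
    (∀ x ∈ deltaSet (2 ^ n), MF.mulVec (vecKron (MG.mulVec x) x) = c) ↔
      ∀ i j, MG i j ≤ T i j :=
  antecedence_iff_general m n s MF c T hT MG hMG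
end
end

section
/- Set-stabilization criterion: let M ⊆ Δ_{2^n}, W_0 the largest control invariant subset of M, and define W_{k+1} = { x : ∃ u, M_F u x ∈ W_0 ∪ ⋯ ∪ W_k }. Then the BCN is state-feedback stabilizable to M (there exist M_G and T with closed-loop trajectories in M for all t ≥ T from every initial state) if and only if W_0 ≠ ∅ and ⋃_k W_k = Δ_{2^n}. -/
open Matrix Kronecker

noncomputable section

/-!
If the closed loop `φ x = F (g x) x` of a feedback `g` stays in `M` from time `T` on, then
`φ^[T] '' Δ` is a control invariant subset of `M`, hence of `W₀`; reading each trajectory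
backwards then puts every state into `W_T`. Conversely, if the `W_k` cover `Δ`, each state has a
least level `k` with `x ∈ W_k`, and a control can be chosen at `x` that lowers this level by one,
or keeps the state in `W₀` when `k = 0`. Logical matrices realize any such choice of controls,
and since `Δ` is finite a single horizon `T` bounds the levels of all states.
-/

open Set

section ControlSystem

variable {X Y : Type*}

def IsControlInvariant (F : Y → X → X) (C : Set Y) (S : Set X) : Prop :=
  ∀ x ∈ S, ∃ u ∈ C, F u x ∈ S

def controlPre (F : Y → X → X) (C : Set Y) (D A : Set X) : Set X :=
  {x | x ∈ D ∧ ∃ u ∈ C, F u x ∈ A}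

def closedLoop (F : Y → X → X) (g : X → Y) : X → X :=
  fun x => F (g x) x

variable {F : Y → X → X} {C : Set Y} {D : Set X} {W : ℕ → Set X}

lemma subset_of_eq_controlPre (h0 : W 0 ⊆ D)
    (hsucc : ∀ k, W (k + 1) = controlPre F C D (accumulate W k)) : ∀ k, W k ⊆ D
  | 0 => h0
  | k + 1 => (hsucc k).trans_subset fun _ hx => hx.1

lemma mapsTo_closedLoop (hF : ∀ u ∈ C, MapsTo (F u) D D) {g : X → Y} (hg : MapsTo g D C) :
    MapsTo (closedLoop F g) D D :=
  fun _ hx => hF _ (hg hx) hx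

lemma isControlInvariant_image_iterate_closedLoop (hF : ∀ u ∈ C, MapsTo (F u) D D)
    {g : X → Y} (hg : MapsTo g D C) (T : ℕ) :
    IsControlInvariant F C ((closedLoop F g)^[T] '' D) := by
  rintro _ ⟨x, hx, rfl⟩
  have hφ := mapsTo_closedLoop hF hg
  refine ⟨g ((closedLoop F g)^[T] x), hg (hφ.iterate T hx), ?_⟩
  refine ⟨closedLoop F g x, hφ hx, ?_⟩
  rw [← Function.iterate_succ_apply, Function.iterate_succ_apply']
  rfl

lemma mem_of_iterate_closedLoop_mem (hF : ∀ u ∈ C, MapsTo (F u) D D) {g : X → Y}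
    (hg : MapsTo g D C) (hsucc : ∀ k, W (k + 1) = controlPre F C D (accumulate W k)) :
    ∀ s, ∀ x ∈ D, (closedLoop F g)^[s] x ∈ W 0 → x ∈ W s
  | 0, _, _, h => h
  | s + 1, x, hx, h => by
    have hnext : closedLoop F g x ∈ W s :=
      mem_of_iterate_closedLoop_mem hF hg hsucc s _ (mapsTo_closedLoop hF hg hx) h
    rw [hsucc]
    exact ⟨hx, g x, hg hx, subset_accumulate hnext⟩

lemma nonempty_and_iUnion_eq_of_stabilizing (hF : ∀ u ∈ C, MapsTo (F u) D D)
    (hD : D.Nonempty) {M : Set X}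
    (hmax : ∀ S, S ⊆ M → IsControlInvariant F C S → S ⊆ W 0) (h0 : W 0 ⊆ D)
    (hsucc : ∀ k, W (k + 1) = controlPre F C D (accumulate W k))
    {g : X → Y} (hg : MapsTo g D C) {T : ℕ}
    (hT : ∀ x ∈ D, ∀ t ≥ T, (closedLoop F g)^[t] x ∈ M) :
    (W 0).Nonempty ∧ ⋃ k, W k = D := by
  have hW0 : (closedLoop F g)^[T] '' D ⊆ W 0 :=
    hmax _ (image_subset_iff.2 fun x hx => hT x hx T le_rfl)
      (isControlInvariant_image_iterate_closedLoop hF hg T)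
  refine ⟨(hD.image _).mono hW0, (iUnion_subset (subset_of_eq_controlPre h0 hsucc)).antisymm ?_⟩
  intro x hx
  exact mem_iUnion_of_mem T
    (mem_of_iterate_closedLoop_mem hF hg hsucc T x hx (hW0 (mem_image_of_mem _ hx)))

/-- Level `k - 1` is read with truncated subtraction: at level `0` the control keeps the state
in `W 0`. -/
lemma exists_control_mem_accumulate_pred (hinv : IsControlInvariant F C (W 0))
    (hsucc : ∀ k, W (k + 1) = controlPre F C D (accumulate W k)) {x : X} (hx : x ∈ ⋃ k, W k) :
    ∃ u ∈ C, ∀ k, x ∈ accumulate W k → F u x ∈ accumulate W (k - 1) := by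
  classical
  have hex : ∃ k, x ∈ W k := mem_iUnion.1 hx
  have hle : ∀ k, x ∈ accumulate W k → Nat.find hex ≤ k := by
    intro k hk
    obtain ⟨j, hjk, hj⟩ := mem_accumulate.1 hk
    exact (Nat.find_min' hex hj).trans hjk
  rcases hlevel : Nat.find hex with _ | l
  · obtain ⟨u, hu, hux⟩ := hinv x (hlevel ▸ Nat.find_spec hex)
    exact ⟨u, hu, fun k _ => mem_accumulate.2 ⟨0, (k - 1).zero_le, hux⟩⟩
  · have hxl := Nat.find_spec hex
    rw [hlevel, hsucc] at hxl
    obtain ⟨-, u, hu, hux⟩ := hxl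
    refine ⟨u, hu, fun k hk => monotone_accumulate ?_ hux⟩
    have := hle k hk
    omega

lemma mapsTo_iterate_accumulate {φ : X → X}
    (hφ : ∀ k, MapsTo φ (accumulate W k) (accumulate W (k - 1))) :
    ∀ t, MapsTo φ^[t] (accumulate W t) (W 0)
  | 0 => by simpa using mapsTo_id (W 0)
  | t + 1 => fun _ hx => mapsTo_iterate_accumulate hφ t (hφ (t + 1) hx)

lemma exists_iterate_mem_of_mapsTo_accumulate (hD : D.Finite) (hcover : D ⊆ ⋃ k, W k)
    {φ : X → X} (hφ : ∀ k, MapsTo φ (accumulate W k) (accumulate W (k - 1))) :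
    ∃ T, ∀ x ∈ D, ∀ t ≥ T, φ^[t] x ∈ W 0 := by
  have hdir : Directed (· ⊆ ·) (accumulate W) := monotone_accumulate.directed_le
  obtain ⟨T, hT⟩ := hdir.exists_mem_subset_of_finset_subset_biUnion (s := hD.toFinset)
    (by rwa [hD.coe_toFinset, iUnion_accumulate])
  rw [hD.coe_toFinset] at hT
  exact ⟨T, fun x hx t ht => mapsTo_iterate_accumulate hφ t (monotone_accumulate ht (hT hx))⟩

end ControlSystem

lemma eVec_eq_single (N : ℕ) (i : Fin N) : eVec N i = Pi.single i 1 := by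
  funext j
  simp [eVec, Pi.single_apply]

lemma deltaSet_finite (N : ℕ) : (deltaSet N).Finite :=
  (finite_range (eVec N)).subset fun _ ⟨i, hi⟩ => ⟨i, hi.symm⟩

lemma vecKron_eVec {M N : ℕ} (i : Fin M) (j : Fin N) :
    vecKron (eVec M i) (eVec N j) = eVec (M * N) (kronEquiv M N (i, j)) := by
  funext k
  obtain ⟨⟨a, b⟩, rfl⟩ := (kronEquiv M N).surjective k
  simp only [vecKron, eVec, Equiv.symm_apply_apply, (kronEquiv M N).apply_eq_iff_eq,
    Prod.mk.injEq, ite_and]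
  split_ifs <;> simp

lemma vecKron_mem_deltaSet {M N : ℕ} {u : Fin M → ℝ} {x : Fin N → ℝ} (hu : u ∈ deltaSet M)
    (hx : x ∈ deltaSet N) : vecKron u x ∈ deltaSet (M * N) := by
  obtain ⟨i, rfl⟩ := hu
  obtain ⟨j, rfl⟩ := hx
  exact ⟨_, vecKron_eVec i j⟩

lemma IsLogical.mulVec_mem_deltaSet {p q : ℕ} {L : Matrix (Fin p) (Fin q) ℝ} (hL : IsLogical L)
    {x : Fin q → ℝ} (hx : x ∈ deltaSet q) : L.mulVec x ∈ deltaSet p := by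
  obtain ⟨j, rfl⟩ := hx
  obtain ⟨i, hi⟩ := hL j
  rw [eVec_eq_single, Matrix.mulVec_single_one]
  exact ⟨i, hi⟩

lemma exists_isLogical_forall_mem_deltaSet {p q : ℕ} {P : (Fin q → ℝ) → (Fin p → ℝ) → Prop}
    (h : ∀ x ∈ deltaSet q, ∃ u ∈ deltaSet p, P x u) :
    ∃ L : Matrix (Fin p) (Fin q) ℝ, IsLogical L ∧ ∀ x ∈ deltaSet q, P x (L.mulVec x) := by
  choose u hu hP using fun j => h (eVec q j) ⟨j, rfl⟩
  have hcol : ∀ j, (Matrix.of fun a b => u b a).mulVec (eVec q j) = u j := fun j => by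
    rw [eVec_eq_single, Matrix.mulVec_single_one]
    rfl
  refine ⟨Matrix.of fun a b => u b a, fun j => ?_, ?_⟩
  · obtain ⟨i, hi⟩ := hu j
    exact ⟨i, hi⟩
  · rintro _ ⟨j, rfl⟩
    rw [hcol]
    exact hP j

/-- set-stabilization criterion. The BCN is state-feedback
stabilizable to `M` iff the largest control invariant subset `W_0` of `M` is
nonempty and the iterated reachable-to sets exhaust `Δ_{2^n}`. -/
theorem set_stabilization_criterion (m n : ℕ)
    (MF : Matrix (Fin (2 ^ n)) (Fin (2 ^ m * 2 ^ n)) ℝ) (hMF : IsLogical MF)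
    (M : Set (Fin (2 ^ n) → ℝ)) (hM : M ⊆ deltaSet (2 ^ n))
    (W0 : Set (Fin (2 ^ n) → ℝ)) (hW0M : W0 ⊆ M)
    (hW0inv : ∀ x ∈ W0, ∃ u ∈ deltaSet (2 ^ m), MF.mulVec (vecKron u x) ∈ W0)
    (hW0max : ∀ S, S ⊆ M →
      (∀ x ∈ S, ∃ u ∈ deltaSet (2 ^ m), MF.mulVec (vecKron u x) ∈ S) → S ⊆ W0)
    (W : ℕ → Set (Fin (2 ^ n) → ℝ)) (hW0' : W 0 = W0)
    (hWs : ∀ k, W (k + 1) = {x | x ∈ deltaSet (2 ^ n) ∧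
      ∃ u ∈ deltaSet (2 ^ m),
        MF.mulVec (vecKron u x) ∈ ⋃ i ∈ Finset.range (k + 1), W i}) :
    (∃ MG : Matrix (Fin (2 ^ m)) (Fin (2 ^ n)) ℝ, IsLogical MG ∧
        ∃ T : ℕ, ∀ x ∈ deltaSet (2 ^ n), ∀ t ≥ T,
          (fun y => MF.mulVec (vecKron (MG.mulVec y) y))^[t] x ∈ M) ↔
      (W0.Nonempty ∧ (⋃ k, W k) = deltaSet (2 ^ n)) := by
  subst hW0'
  set F := fun u x => MF.mulVec (vecKron u x)
  have hF : ∀ u ∈ deltaSet (2 ^ m), MapsTo (F u) (deltaSet (2 ^ n)) (deltaSet (2 ^ n)) :=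
    fun _ hu _ hx => hMF.mulVec_mem_deltaSet (vecKron_mem_deltaSet hu hx)
  have hsucc : ∀ k, W (k + 1) = controlPre F (deltaSet (2 ^ m)) (deltaSet (2 ^ n))
      (accumulate W k) := fun k => by
    rw [hWs, accumulate_def]
    simp only [Finset.mem_range, Nat.lt_succ_iff]
    rfl
  have hWD := subset_of_eq_controlPre (hW0M.trans hM) hsucc
  constructor
  · rintro ⟨MG, hMG, T, hT⟩
    exact nonempty_and_iUnion_eq_of_stabilizing hF ⟨_, 0, rfl⟩ hW0max (hW0M.trans hM) hsucc
      (fun _ => hMG.mulVec_mem_deltaSet) hT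
  · rintro ⟨-, hcover⟩
    obtain ⟨MG, hMG, hdesc⟩ := exists_isLogical_forall_mem_deltaSet fun x hx =>
      exists_control_mem_accumulate_pred hW0inv hsucc (hcover.symm ▸ hx)
    obtain ⟨T, hT⟩ := exists_iterate_mem_of_mapsTo_accumulate (deltaSet_finite _) hcover.ge
      fun k x hx => hdesc x (iUnion_subset hWD (accumulate_subset_iUnion k hx)) k hx
    exact ⟨MG, hMG, T, fun x hx t ht => hW0M (hT x hx t ht)⟩
end
end
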